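/- Let α, β > 0 and (v, θ, ω) ∈ ℝ³ with ω ≠ 0 and ω·H₁(v,θ,ω) < 0. Set t₁ = −H₁(v,θ,ω)/(2αω), t₂ = |ω|/α, and let s₄ ∈ {−1,1} satisfy s₄·ω = −|ω|. Then t₁ > 0, and there exists s₃ ∈ {−1,1} such that t₃ := v/(s₃β) + t₁ > 0 and the C2b final state from (v, θ, ω) with durations t₁, t₂, t₃ and signs s₃, s₄ equals (0, 0, 0). -/

import Mathlib

/- The three phases are decoupled. The middle phase brakes the rotation to rest (`t₂ = |ω|/α`, with
`s₄` opposing `ω`), and `t₁` is exactly the coasting time at rate `ω` after which braking lands on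
`θ = 0`, which is positive precisely when `ω * H₁ < 0`. The linear motion is independent: accelerating
for `t₁` and decelerating for `t₃ = v/(s₃β) + t₁` cancels `v`, and choosing `s₃` with the sign of
`v` makes `t₃ ≥ t₁ > 0`. -/

noncomputable def H1 (α v θ ω : ℝ) : ℝ := 2 * α * θ + ω * |ω|

/-- The C2b final state `(v_f, θ_f, ω_f)`: first phase linear acceleration `s₃ * β`
for time `t₁`, second phase angular acceleration `s₄ * α` for time `t₂`, third phase
linear acceleration `-s₃ * β` for time `t₃`. -/
noncomputable def c2bFinal (α β v θ ω t₁ t₂ t₃ s₃ s₄ : ℝ) : ℝ × ℝ × ℝ :=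
  (v + s₃ * β * (t₁ - t₃),
   θ + ω * t₁ + ω * t₂ + s₄ * α * t₂ ^ 2 / 2 + (ω + s₄ * α * t₂) * t₃,
   ω + s₄ * α * t₂)

lemma mul_abs_eq_neg_of_mul_eq_neg_abs {s ω : ℝ} (hω : ω ≠ 0) (h : s * ω = -|ω|) :
    s * |ω| = -ω := by
  have : ω * (s * |ω| + ω) = 0 := by
    linear_combination |ω| * h + (sq_abs ω).symm
  simpa [hω, add_eq_zero_iff_eq_neg] using this

lemma exists_sign_div_nonneg (v : ℝ) {β : ℝ} (hβ : 0 < β) :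
    ∃ s : ℝ, (s = -1 ∨ s = 1) ∧ 0 ≤ v / (s * β) := by
  rcases le_or_gt 0 v with hv | hv
  · exact ⟨1, Or.inr rfl, by positivity⟩
  · exact ⟨-1, Or.inl rfl, div_nonneg_of_nonpos hv.le (by linarith)⟩

lemma c2bFinal_eq_zero {α β v θ ω t₁ t₂ s₃ s₄ : ℝ} (hs₃β : s₃ * β ≠ 0)
    (hω : ω + s₄ * α * t₂ = 0) (hθ : θ + ω * t₁ + ω * t₂ + s₄ * α * t₂ ^ 2 / 2 = 0) :
    c2bFinal α β v θ ω t₁ t₂ (v / (s₃ * β) + t₁) s₃ s₄ = (0, 0, 0) := by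
  simp only [c2bFinal, hω, hθ, zero_mul, add_zero]
  generalize s₃ * β = c at hs₃β ⊢
  congr 1
  field_simp
  ring

theorem stmt3_general (α β v θ ω : ℝ) (hα : 0 < α) (hβ : 0 < β)
    (hωH1 : ω * H1 α v θ ω < 0)
    (t₁ t₂ : ℝ)
    (ht₁ : t₁ = -(H1 α v θ ω) / (2 * α * ω))
    (ht₂ : t₂ = |ω| / α)
    (s₄ : ℝ) (hs₄ω : s₄ * ω = -|ω|) :
    0 < t₁ ∧
    ∃ s₃ : ℝ, (s₃ = -1 ∨ s₃ = 1) ∧ 0 < v / (s₃ * β) + t₁ ∧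
      c2bFinal α β v θ ω t₁ t₂ (v / (s₃ * β) + t₁) s₃ s₄ = (0, 0, 0) := by
  have hω : ω ≠ 0 := by rintro rfl; simp at hωH1
  have hs₄ : s₄ * |ω| = -ω := mul_abs_eq_neg_of_mul_eq_neg_abs hω hs₄ω
  have ht₁_pos : 0 < t₁ := by
    rw [ht₁, show -H1 α v θ ω / (2 * α * ω) = -(ω * H1 α v θ ω) / (2 * α * ω ^ 2) by
      field_simp]
    exact div_pos (by linarith) (by positivity)
  have hω_final : ω + s₄ * α * t₂ = 0 := by
    rw [ht₂]; field_simp; linear_combination hs₄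
  have hθ_final : θ + ω * t₁ + ω * t₂ + s₄ * α * t₂ ^ 2 / 2 = 0 := by
    rw [ht₁, ht₂, H1]; field_simp; linear_combination |ω| * hs₄
  obtain ⟨s₃, hs₃, hv⟩ := exists_sign_div_nonneg v hβ
  have hs₃β : s₃ * β ≠ 0 := mul_ne_zero (by rcases hs₃ with rfl | rfl <;> norm_num) hβ.ne'
  exact ⟨ht₁_pos, s₃, hs₃, by linarith, c2bFinal_eq_zero hs₃β hω_final hθ_final⟩

theorem stmt3 (α β v θ ω : ℝ) (hα : 0 < α) (hβ : 0 < β)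
    (hω : ω ≠ 0) (hωH1 : ω * H1 α v θ ω < 0)
    (t₁ t₂ : ℝ)
    (ht₁ : t₁ = -(H1 α v θ ω) / (2 * α * ω))
    (ht₂ : t₂ = |ω| / α)
    (s₄ : ℝ) (hs₄ : s₄ = -1 ∨ s₄ = 1) (hs₄ω : s₄ * ω = -|ω|) :
    0 < t₁ ∧
    ∃ s₃ : ℝ, (s₃ = -1 ∨ s₃ = 1) ∧ 0 < v / (s₃ * β) + t₁ ∧
      c2bFinal α β v θ ω t₁ t₂ (v / (s₃ * β) + t₁) s₃ s₄ = (0, 0, 0) :=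
  stmt3_general α β v θ ω hα hβ hωH1 t₁ t₂ ht₁ ht₂ s₄ hs₄ω
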